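/- arXiv:2311.00840 — 6 statements merged into one kernel-verified Lean document; each statement's English description precedes it below -/
import Mathlib

section
/- For τ ∈ (0,1) and 0 < ε < min(τ,1-τ), the symmetrized entropy gap satisfies H(τ) - (H(τ+ε) + H(τ-ε))/2 ≥ ε²/(2·ln 2·τ·(1-τ)). -/
noncomputable def binEntropy (x : ℝ) : ℝ :=
  -(x * Real.logb 2 x) - (1 - x) * Real.logb 2 (1 - x)

/-! With `u = ε / t`, the second difference `φ(t+ε) + φ(t-ε) - 2φ(t)` of `φ(x) = x log x`
equals `t ((1+u) log(1+u) + (1-u) log(1-u))`. This function of `u` has the power series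
`∑ u^(2k+2) / ((2k+1)(k+1))`, whose terms are nonnegative and whose leading term is `u²`, so
the second difference is at least `ε² / t`. The entropy gap is `(2 log 2)⁻¹` times the sum of
the second differences at `τ` and at `1 - τ`, hence at least `(ε²/τ + ε²/(1-τ)) / (2 log 2)`. -/

namespace Real

theorem hasSum_one_add_mul_log_add_one_sub_mul_log {u : ℝ} (hu : |u| < 1) :
    HasSum (fun k : ℕ => (u ^ 2) ^ (k + 1) / ((2 * k + 1) * (k + 1)))
      ((1 + u) * log (1 + u) + (1 - u) * log (1 - u)) := by
  obtain ⟨hu₁, hu₂⟩ := abs_lt.mp hu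
  have hu_sq : |u ^ 2| < 1 := by rw [abs_pow]; exact pow_lt_one₀ (abs_nonneg u) hu two_ne_zero
  have hterm (k : ℕ) : u * (2 * (1 / (2 * k + 1)) * u ^ (2 * k + 1)) - (u ^ 2) ^ (k + 1) / (k + 1)
      = (u ^ 2) ^ (k + 1) / ((2 * k + 1) * (k + 1)) := by
    field_simp
    ring
  have hsum : u * (log (1 + u) - log (1 - u)) - -log (1 - u ^ 2)
      = (1 + u) * log (1 + u) + (1 - u) * log (1 - u) := by
    rw [show 1 - u ^ 2 = (1 + u) * (1 - u) by ring, log_mul (by linarith) (by linarith)]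
    ring
  simpa only [hterm, hsum] using ((hasSum_log_sub_log_of_abs_lt_one hu).mul_left u).sub
    (hasSum_pow_div_log_of_abs_lt_one hu_sq)

theorem sq_le_one_add_mul_log_add_one_sub_mul_log {u : ℝ} (hu : |u| < 1) :
    u ^ 2 ≤ (1 + u) * log (1 + u) + (1 - u) * log (1 - u) := by
  simpa using le_hasSum (hasSum_one_add_mul_log_add_one_sub_mul_log hu) 0
    fun k _ => by positivity

theorem negMulLog_add_add_negMulLog_sub_le {t ε : ℝ} (hε : |ε| < t) :
    negMulLog (t + ε) + negMulLog (t - ε) ≤ 2 * negMulLog t - ε ^ 2 / t := by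
  have ht : 0 < t := (abs_nonneg ε).trans_lt hε
  have hu : |ε / t| < 1 := by rwa [abs_div, abs_of_pos ht, div_lt_one ht]
  obtain ⟨hu₁, hu₂⟩ := abs_lt.mp hu
  have key := mul_le_mul_of_nonneg_left (sq_le_one_add_mul_log_add_one_sub_mul_log hu) ht.le
  have hsq : t * (ε / t) ^ 2 = ε ^ 2 / t := by field_simp
  rw [show t + ε = t * (1 + ε / t) by field_simp, show t - ε = t * (1 - ε / t) by field_simp]
  simp only [negMulLog, log_mul ht.ne' (by linarith : 1 + ε / t ≠ 0),
    log_mul ht.ne' (by linarith : 1 - ε / t ≠ 0)]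
  linarith

end Real

theorem binEntropy_eq_negMulLog (x : ℝ) :
    binEntropy x = (Real.negMulLog x + Real.negMulLog (1 - x)) / Real.log 2 := by
  simp only [binEntropy, Real.negMulLog, Real.logb]
  ring

theorem entropy_gap_lower_bound_general (τ ε : ℝ)
    (hε0 : 0 < ε) (hε : ε < min τ (1 - τ)) :
    binEntropy τ - (binEntropy (τ + ε) + binEntropy (τ - ε)) / 2 ≥
      ε ^ 2 / (2 * Real.log 2 * τ * (1 - τ)) := by
  obtain ⟨hετ, hε1τ⟩ := lt_min_iff.mp hε
  have hτ : 0 < τ := hε0.trans hετ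
  have h1τ : 0 < 1 - τ := hε0.trans hε1τ
  have gap_τ := Real.negMulLog_add_add_negMulLog_sub_le (t := τ) (by rwa [abs_of_pos hε0])
  have gap_1τ := Real.negMulLog_add_add_negMulLog_sub_le (t := 1 - τ) (by rwa [abs_of_pos hε0])
  simp only [binEntropy_eq_negMulLog, show 1 - (τ + ε) = 1 - τ - ε by ring,
    show 1 - (τ - ε) = 1 - τ + ε by ring]
  calc ε ^ 2 / (2 * Real.log 2 * τ * (1 - τ))
        = (ε ^ 2 / τ + ε ^ 2 / (1 - τ)) / (2 * Real.log 2) := by field_simp; ring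
    _ ≤ (2 * Real.negMulLog τ - (Real.negMulLog (τ + ε) + Real.negMulLog (τ - ε))
          + (2 * Real.negMulLog (1 - τ)
            - (Real.negMulLog (1 - τ + ε) + Real.negMulLog (1 - τ - ε)))) / (2 * Real.log 2) := by
        gcongr ?_ / _
        linarith
    _ = _ := by ring

theorem entropy_gap_lower_bound (τ ε : ℝ) (hτ0 : 0 < τ) (hτ1 : τ < 1)
    (hε0 : 0 < ε) (hε : ε < min τ (1 - τ)) :
    binEntropy τ - (binEntropy (τ + ε) + binEntropy (τ - ε)) / 2 ≥
      ε ^ 2 / (2 * Real.log 2 * τ * (1 - τ)) :=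
  entropy_gap_lower_bound_general τ ε hε0 hε
end

section
/- For τ ∈ (0,1) and 0 < ε ≤ (1/2)·min(τ,1-τ), the capacity C_{τ,ε} := max over q ∈ [0,1] of H(τ + (2q-1)ε) - q·H(τ+ε) - (1-q)·H(τ-ε) satisfies C_{τ,ε} ≥ ε²/(2·ln 2·τ·(1-τ)). -/
noncomputable def capacity (τ ε : ℝ) : ℝ :=
  sSup {y | ∃ q ∈ Set.Icc (0 : ℝ) 1,
    y = binEntropy ((1 - q) * (τ - ε) + q * (τ + ε))
        - (1 - q) * binEntropy (τ - ε) - q * binEntropy (τ + ε)}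

/-!
The uniform input `q = 1/2` already achieves the bound. Its mutual information is
`(2 h(τ) - h(τ - ε) - h(τ + ε)) / (2 log 2)` with `h` the binary entropy in nats, and splitting
`h(p) = -p log p - (1 - p) log (1 - p)` reduces the claim to the midpoint-concavity gap
`2 φ(a) - φ(a - e) - φ(a + e) ≥ e² / a` of `φ(x) = -x log x` at `a = τ` and `a = 1 - τ`.
After scaling by `a` this is `(1 + u) log (1 + u) + (1 - u) log (1 - u) ≥ u²`, whose derivative
`log (1 + u) - log (1 - u) - 2u = 2 (u³/3 + u⁵/5 + ⋯)` is nonnegative for `0 ≤ u < 1`.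
-/

open Real hiding binEntropy

lemma two_mul_le_log_one_add_sub_log_one_sub {u : ℝ} (hu₀ : 0 ≤ u) (hu₁ : u < 1) :
    2 * u ≤ log (1 + u) - log (1 - u) := by
  have hsum := hasSum_log_sub_log_of_abs_lt_one (abs_lt.2 ⟨by linarith, hu₁⟩)
  simpa using le_hasSum hsum 0 fun k _ => by positivity

lemma negMulLog_one_add_add_negMulLog_one_sub_le_of_nonneg {u : ℝ} (hu₀ : 0 ≤ u) (hu₁ : u < 1) :
    negMulLog (1 + u) + negMulLog (1 - u) ≤ -u ^ 2 := by
  set F : ℝ → ℝ := fun x => negMulLog (1 + x) + negMulLog (1 - x) + x ^ 2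
  have hF' : ∀ x ∈ Set.Ioo (0 : ℝ) 1,
      HasDerivAt F (-(log (1 + x) - log (1 - x) - 2 * x)) x := by
    intro x ⟨hx₀, hx₁⟩
    have h_add := (hasDerivAt_negMulLog (by linarith : 1 + x ≠ 0)).comp x
      ((hasDerivAt_id x).const_add 1)
    have h_sub := (hasDerivAt_negMulLog (by linarith : 1 - x ≠ 0)).comp x
      ((hasDerivAt_id x).const_sub 1)
    refine ((h_add.add h_sub).add (hasDerivAt_pow 2 x)).congr_deriv ?_
    push_cast
    ring
  have hanti : AntitoneOn F (Set.Ico 0 1) := by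
    refine antitoneOn_of_hasDerivWithinAt_nonpos (convex_Ico 0 1)
      (f' := fun x => -(log (1 + x) - log (1 - x) - 2 * x)) ?_ ?_ ?_
    · exact (by fun_prop : Continuous F).continuousOn
    · rw [interior_Ico]
      exact fun x hx => (hF' x hx).hasDerivWithinAt
    · rw [interior_Ico]
      intro x ⟨hx₀, hx₁⟩
      linarith [two_mul_le_log_one_add_sub_log_one_sub hx₀.le hx₁]
  have hF_le := hanti ⟨le_rfl, one_pos⟩ ⟨hu₀, hu₁⟩ hu₀
  simp only [F, add_zero, sub_zero, negMulLog_one] at hF_le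
  linarith

lemma negMulLog_one_add_add_negMulLog_one_sub_le {u : ℝ} (hu : |u| < 1) :
    negMulLog (1 + u) + negMulLog (1 - u) ≤ -u ^ 2 := by
  rcases le_total 0 u with hu₀ | hu₀
  · exact negMulLog_one_add_add_negMulLog_one_sub_le_of_nonneg hu₀ (abs_lt.1 hu).2
  · have := negMulLog_one_add_add_negMulLog_one_sub_le_of_nonneg (neg_nonneg.2 hu₀)
      (by linarith [(abs_lt.1 hu).1])
    rwa [sub_neg_eq_add, ← sub_eq_add_neg, add_comm, neg_sq] at this

lemma sq_div_le_two_mul_negMulLog_sub {a e : ℝ} (ha : 0 < a) (he : |e| < a) :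
    e ^ 2 / a ≤ 2 * negMulLog a - negMulLog (a - e) - negMulLog (a + e) := by
  have hu : |e / a| < 1 := by rwa [abs_div, abs_of_pos ha, div_lt_one ha]
  have key := negMulLog_one_add_add_negMulLog_one_sub_le hu
  have h_add : a + e = a * (1 + e / a) := by field_simp
  have h_sub : a - e = a * (1 - e / a) := by field_simp
  rw [h_add, h_sub, negMulLog_mul, negMulLog_mul]
  have hsq : e ^ 2 / a = a * (e / a) ^ 2 := by field_simp
  rw [hsq]
  nlinarith

lemma sq_div_le_two_mul_binEntropy_sub {τ ε : ℝ} (hτ : |ε| < τ) (hτ' : |ε| < 1 - τ) :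
    ε ^ 2 / (τ * (1 - τ)) ≤
      2 * Real.binEntropy τ - Real.binEntropy (τ - ε) - Real.binEntropy (τ + ε) := by
  have hτ₀ : 0 < τ := (abs_nonneg ε).trans_lt hτ
  have hτ₁ : 0 < 1 - τ := (abs_nonneg ε).trans_lt hτ'
  have hsplit : ε ^ 2 / (τ * (1 - τ)) = ε ^ 2 / τ + ε ^ 2 / (1 - τ) := by
    field_simp
    ring
  simp only [hsplit, binEntropy_eq_negMulLog_add_negMulLog_one_sub,
    show 1 - (τ - ε) = 1 - τ + ε by ring, show 1 - (τ + ε) = 1 - τ - ε by ring]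
  linarith [sq_div_le_two_mul_negMulLog_sub hτ₀ hτ, sq_div_le_two_mul_negMulLog_sub hτ₁ hτ']

lemma binEntropy_eq_binEntropy_div_log_two (x : ℝ) :
    binEntropy x = Real.binEntropy x / log 2 := by
  simp only [binEntropy, Real.binEntropy_eq_negMulLog_add_negMulLog_one_sub, negMulLog, logb]
  ring

lemma binEntropy_le_one (x : ℝ) : binEntropy x ≤ 1 := by
  rw [binEntropy_eq_binEntropy_div_log_two, div_le_one (log_pos one_lt_two)]
  exact Real.binEntropy_le_log_two

lemma le_capacity (τ ε : ℝ) {q : ℝ} (hq : q ∈ Set.Icc (0 : ℝ) 1) :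
    binEntropy ((1 - q) * (τ - ε) + q * (τ + ε))
      - (1 - q) * binEntropy (τ - ε) - q * binEntropy (τ + ε) ≤ capacity τ ε := by
  refine le_csSup ⟨1 + |binEntropy (τ - ε)| + |binEntropy (τ + ε)|, ?_⟩ ⟨q, hq, rfl⟩
  rintro _ ⟨r, ⟨hr₀, hr₁⟩, rfl⟩
  have hb := binEntropy_le_one ((1 - r) * (τ - ε) + r * (τ + ε))
  nlinarith [neg_abs_le (binEntropy (τ - ε)), neg_abs_le (binEntropy (τ + ε)),
    abs_nonneg (binEntropy (τ - ε)), abs_nonneg (binEntropy (τ + ε))]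

theorem capacity_lower_bound_general (τ ε : ℝ)
    (hε0 : 0 < ε) (hε : ε ≤ (1/2) * min τ (1 - τ)) :
    capacity τ ε ≥ ε ^ 2 / (2 * Real.log 2 * τ * (1 - τ)) := by
  have hετ : |ε| < τ := by
    rw [abs_of_pos hε0]; linarith [min_le_left τ (1 - τ)]
  have hετ' : |ε| < 1 - τ := by
    rw [abs_of_pos hε0]; linarith [min_le_right τ (1 - τ)]
  have hgap := sq_div_le_two_mul_binEntropy_sub hετ hετ'
  have huniform := le_capacity τ ε (q := 1 / 2) ⟨by norm_num, by norm_num⟩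
  rw [show (1 - 1 / 2) * (τ - ε) + 1 / 2 * (τ + ε) = τ by ring] at huniform
  simp only [binEntropy_eq_binEntropy_div_log_two] at huniform
  have hlog : 0 < log 2 := log_pos one_lt_two
  calc ε ^ 2 / (2 * log 2 * τ * (1 - τ))
      = ε ^ 2 / (τ * (1 - τ)) / (2 * log 2) := by field_simp
    _ ≤ (2 * Real.binEntropy τ - Real.binEntropy (τ - ε) - Real.binEntropy (τ + ε))
          / (2 * log 2) := by gcongr
    _ = _ := by field_simp; ring
    _ ≤ capacity τ ε := huniform

theorem capacity_lower_bound (τ ε : ℝ) (hτ0 : 0 < τ) (hτ1 : τ < 1)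
    (hε0 : 0 < ε) (hε : ε ≤ (1/2) * min τ (1 - τ)) :
    capacity τ ε ≥ ε ^ 2 / (2 * Real.log 2 * τ * (1 - τ)) :=
  capacity_lower_bound_general τ ε hε0 hε
end

section
/- With z = 2^{(H(τ-ε)-H(τ+ε))/(2ε)}, q = ((1-τ+ε) - 1/(1+z))/(2ε), and C = lg(1+z) + ((τ-ε)/(2ε))·H(τ+ε) - ((τ+ε)/(2ε))·H(τ-ε), we have C = (τ+ε)·lg((τ+ε)/(τ+(2q-1)ε)) + (1-τ-ε)·lg((1-τ-ε)/(1-τ-(2q-1)ε)). -/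
theorem capacity_closed_form_plus (τ ε z q C : ℝ)
    (hτ0 : 0 < τ) (hτ1 : τ < 1) (hε0 : 0 < ε) (hε : ε < min τ (1 - τ))
    (hz : z = (2 : ℝ) ^ ((binEntropy (τ - ε) - binEntropy (τ + ε)) / (2 * ε)))
    (hq : q = ((1 - τ + ε) - 1 / (1 + z)) / (2 * ε))
    (hC : C = Real.logb 2 (1 + z) + ((τ - ε) / (2 * ε)) * binEntropy (τ + ε)
              - ((τ + ε) / (2 * ε)) * binEntropy (τ - ε)) :
    C = (τ + ε) * Real.logb 2 ((τ + ε) / (τ + (2 * q - 1) * ε))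
        + (1 - τ - ε) * Real.logb 2 ((1 - τ - ε) / (1 - τ - (2 * q - 1) * ε)) := by
  have hεlt : ε < 1 - τ := lt_of_lt_of_le hε (min_le_right _ _)
  have ha0 : 0 < τ + ε := by linarith
  have ha1 : 0 < 1 - τ - ε := by linarith
  have hz0 : 0 < z := hz ▸ Real.rpow_pos_of_pos two_pos _
  have h1z : 0 < 1 + z := by linarith
  have hεne : (2 : ℝ) * ε ≠ 0 := by positivity
  have hlgz : Real.logb 2 z = (binEntropy (τ - ε) - binEntropy (τ + ε)) / (2 * ε) := by
    rw [hz, Real.logb_rpow (by norm_num)] <;> norm_num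
  have hd1 : τ + (2 * q - 1) * ε = z / (1 + z) := by
    rw [hq]; field_simp; ring
  have hd2 : 1 - τ - (2 * q - 1) * ε = 1 / (1 + z) := by
    rw [hq]; field_simp; ring
  rw [hd1, hd2, div_div_eq_mul_div, Real.logb_div (by positivity) (by positivity),
    Real.logb_mul (by positivity) (by positivity),
    one_div, div_eq_mul_inv (1 - τ - ε), inv_inv, Real.logb_mul (by positivity) (by positivity), hC, hlgz]
  simp only [binEntropy]
  field_simp
  ring
end

section
/- With z = 2^{(H(τ-ε)-H(τ+ε))/(2ε)}, q = ((1-τ+ε) - 1/(1+z))/(2ε), and C = lg(1+z) + ((τ-ε)/(2ε))·H(τ+ε) - ((τ+ε)/(2ε))·H(τ-ε), we have C = (τ-ε)·lg((τ-ε)/(τ+(2q-1)ε)) + (1-τ+ε)·lg((1-τ+ε)/(1-τ-(2q-1)ε)). -/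
theorem capacity_closed_form_minus (τ ε z q C : ℝ)
    (hτ0 : 0 < τ) (hτ1 : τ < 1) (hε0 : 0 < ε) (hε : ε < min τ (1 - τ))
    (hz : z = (2 : ℝ) ^ ((binEntropy (τ - ε) - binEntropy (τ + ε)) / (2 * ε)))
    (hq : q = ((1 - τ + ε) - 1 / (1 + z)) / (2 * ε))
    (hC : C = Real.logb 2 (1 + z) + ((τ - ε) / (2 * ε)) * binEntropy (τ + ε)
              - ((τ + ε) / (2 * ε)) * binEntropy (τ - ε)) :
    C = (τ - ε) * Real.logb 2 ((τ - ε) / (τ + (2 * q - 1) * ε))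
        + (1 - τ + ε) * Real.logb 2 ((1 - τ + ε) / (1 - τ - (2 * q - 1) * ε)) := by
  have hε1 : ε < τ := lt_of_lt_of_le hε (min_le_left _ _)
  have hε2 : ε < 1 - τ := lt_of_lt_of_le hε (min_le_right _ _)
  have ha : 0 < τ - ε := by linarith
  have hb : 0 < 1 - τ + ε := by linarith
  have hzpos : 0 < z := by rw [hz]; positivity
  have h1z : 0 < 1 + z := by linarith
  have hlgz : Real.logb 2 z = (binEntropy (τ - ε) - binEntropy (τ + ε)) / (2 * ε) := by
    rw [hz, Real.logb_rpow] <;> norm_num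
  have h1 : τ + (2 * q - 1) * ε = z / (1 + z) := by
    rw [hq]; field_simp; ring
  have h2 : 1 - τ - (2 * q - 1) * ε = 1 / (1 + z) := by
    rw [hq]; field_simp; ring
  have e1 : Real.logb 2 ((τ - ε) / (z / (1 + z)))
      = Real.logb 2 (τ - ε) - Real.logb 2 z + Real.logb 2 (1 + z) := by
    rw [Real.logb_div ha.ne' (by positivity), Real.logb_div hzpos.ne' h1z.ne']; ring
  have e2 : Real.logb 2 ((1 - τ + ε) / (1 / (1 + z)))
      = Real.logb 2 (1 - τ + ε) + Real.logb 2 (1 + z) := by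
    rw [one_div, Real.logb_div hb.ne' (by positivity), Real.logb_inv]; ring
  rw [hC, h1, h2, e1, e2, hlgz]
  simp only [binEntropy, show (1:ℝ) - (τ - ε) = 1 - τ + ε from by ring]
  field_simp
  ring
end

section
/- For τ ∈ (0,1), 0 < ε ≤ (1/2)·min(τ,1-τ), and the capacity-achieving quantile q of the (τ,ε) binary asymmetric channel, |q - 1/2| ≤ 2ε/(τ(1-τ)). -/
/-- The mutual information objective for querying at quantile `q`. -/
noncomputable def mutualInfo (τ ε q : ℝ) : ℝ :=
  binEntropy ((1 - q) * (τ - ε) + q * (τ + ε))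
    - (1 - q) * binEntropy (τ - ε) - q * binEntropy (τ + ε)

/-!
Write `H` for `Real.binEntropy`. Up to the factor `log 2`, `x ↦ mutualInfo τ ε x` is
`H(τ + (2x - 1)ε) - H(τ - ε) - x D` with `D = H(τ + ε) - H(τ - ε)`, a concave function of `x`.
Put `δ = 2ε / (τ(1 - τ))` and `s = 2δε = 4ε² / (τ(1 - τ))`; the point `x₀ = 1/2 + δ` is sent to
`τ + s`. Comparing the derivatives of `u ↦ H(τ + u) - H(τ - u)` and `u ↦ 2u H'(τ + s)` on `[0, ε]`
shows that `2ε H'(τ + s) < D`, so the objective is strictly decreasing to the right of `x₀` and no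
maximiser lies there. The bound on the other side follows from the symmetry `τ ↦ 1 - τ`,
`x ↦ 1 - x`.
-/

open Set

lemma ConcaveOn.le_add_mul_sub_of_hasDerivAt {S : Set ℝ} {f : ℝ → ℝ} {x y f' : ℝ}
    (hf : ConcaveOn ℝ S f) (hx : x ∈ S) (hy : y ∈ S) (hf' : HasDerivAt f f' x) :
    f y ≤ f x + f' * (y - x) := by
  rcases lt_trichotomy x y with hxy | rfl | hyx
  · have := hf.slope_le_of_hasDerivAt hx hy hxy hf'
    rw [slope_def_field, div_le_iff₀ (sub_pos.mpr hxy)] at this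
    linarith
  · simp
  · have := hf.le_slope_of_hasDerivAt hy hx hyx hf'
    rw [slope_def_field, le_div_iff₀ (sub_pos.mpr hyx)] at this
    linarith

namespace Real

lemma binEntropy_le_add_deriv_mul_sub {a b : ℝ} (ha₀ : 0 < a) (ha₁ : a < 1)
    (hb : b ∈ Icc 0 1) :
    binEntropy b ≤ binEntropy a + deriv binEntropy a * (b - a) :=
  strictConcave_binEntropy.concaveOn.le_add_mul_sub_of_hasDerivAt ⟨ha₀.le, ha₁.le⟩ hb
    (differentiableAt_binEntropy ha₀.ne' ha₁.ne).hasDerivAt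

section Secant

variable {τ ε s : ℝ} (hε : 0 < ε) (hετ : ε ≤ τ / 2) (hε1τ : ε ≤ (1 - τ) / 2)
  (hs : 4 * ε ^ 2 ≤ s * (τ * (1 - τ))) (hsε : s < ε)
include hε hετ hε1τ hs hsε

lemma two_mul_deriv_binEntropy_lt_add {u : ℝ} (hu : u ∈ Icc 0 ε) :
    2 * deriv binEntropy (τ + s) < deriv binEntropy (τ + u) + deriv binEntropy (τ - u) := by
  obtain ⟨hu₀, huε⟩ := hu
  have hτ : 0 < τ * (1 - τ) := mul_pos (by linarith) (by linarith)
  have hs₀ : 0 < s := pos_of_mul_pos_left ((by positivity : 0 < 4 * ε ^ 2).trans_le hs) hτ.le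
  have hpoly : (1 - (τ + s)) ^ 2 * ((τ + u) * (τ - u)) <
      (1 - (τ + u)) * (1 - (τ - u)) * (τ + s) ^ 2 := by
    nlinarith [mul_pos hs₀ hε, mul_nonneg hu₀ hu₀, mul_le_mul huε huε hu₀ hε.le, mul_pos hs₀ hs₀]
  have h₁ : 0 < τ + s := by linarith
  have h₂ : 0 < 1 - (τ + s) := by linarith
  have h₃ : 0 < τ + u := by linarith
  have h₄ : 0 < τ - u := by linarith
  have h₅ : 0 < 1 - (τ + u) := by linarith
  have h₆ : 0 < 1 - (τ - u) := by linarith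
  have hlog := log_lt_log (mul_pos (pow_pos h₂ 2) (mul_pos h₃ h₄)) hpoly
  rw [log_mul (pow_pos h₂ 2).ne' (mul_pos h₃ h₄).ne', log_mul h₃.ne' h₄.ne', log_pow,
    log_mul (mul_pos h₅ h₆).ne' (pow_pos h₁ 2).ne', log_mul h₅.ne' h₆.ne', log_pow] at hlog
  simp only [deriv_binEntropy]
  push_cast at hlog
  linarith

lemma two_mul_mul_deriv_binEntropy_lt_sub :
    2 * ε * deriv binEntropy (τ + s) < binEntropy (τ + ε) - binEntropy (τ - ε) := by
  have hderiv : ∀ u ∈ Icc 0 ε, HasDerivAt (fun v ↦ binEntropy (τ + v) - binEntropy (τ - v))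
      (deriv binEntropy (τ + u) + deriv binEntropy (τ - u)) u := by
    rintro u ⟨hu₀, huε⟩
    have hp := (differentiableAt_binEntropy (p := τ + u) (by linarith) (by linarith)).hasDerivAt
    have hm := (differentiableAt_binEntropy (p := τ - u) (by linarith) (by linarith)).hasDerivAt
    simpa only [sub_neg_eq_add] using (hp.comp_const_add τ u).fun_sub (hm.comp_const_sub τ u)
  have := (convex_Icc 0 ε).mul_sub_lt_image_sub_of_lt_deriv
    (by fun_prop)
    (fun u hu ↦ (hderiv u (interior_subset hu)).differentiableAt.differentiableWithinAt)
    (fun u hu ↦ (hderiv u (interior_subset hu)).deriv ▸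
      two_mul_deriv_binEntropy_lt_add hε hετ hε1τ hs hsε (interior_subset hu))
    0 (left_mem_Icc.mpr hε.le) ε (right_mem_Icc.mpr hε.le) hε
  simp only [add_zero, sub_zero, sub_self] at this
  linarith

end Secant

end Real

lemma binEntropy_eq_div_log_two (x : ℝ) : binEntropy x = Real.binEntropy x / Real.log 2 := by
  simp only [binEntropy, Real.binEntropy, Real.logb, Real.log_inv]
  ring

lemma mutualInfo_eq (τ ε x : ℝ) :
    mutualInfo τ ε x = (Real.binEntropy (τ + (2 * x - 1) * ε) - Real.binEntropy (τ - ε)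
      - x * (Real.binEntropy (τ + ε) - Real.binEntropy (τ - ε))) / Real.log 2 := by
  simp only [mutualInfo, binEntropy_eq_div_log_two]
  rw [show (1 - x) * (τ - ε) + x * (τ + ε) = τ + (2 * x - 1) * ε by ring]
  ring

lemma mutualInfo_one_sub_one_sub (τ ε x : ℝ) :
    mutualInfo (1 - τ) ε (1 - x) = mutualInfo τ ε x := by
  simp only [mutualInfo_eq]
  rw [show 1 - τ + (2 * (1 - x) - 1) * ε = 1 - (τ + (2 * x - 1) * ε) by ring,
    show 1 - τ - ε = 1 - (τ + ε) by ring, show 1 - τ + ε = 1 - (τ - ε) by ring]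
  simp only [Real.binEntropy_one_sub]
  ring

lemma le_half_add_of_isMaxOn_mutualInfo {τ ε q : ℝ} (hε : 0 < ε) (hετ : ε ≤ τ / 2)
    (hε1τ : ε ≤ (1 - τ) / 2) (hq : q ≤ 1) (hmax : IsMaxOn (mutualInfo τ ε) (Icc 0 1) q) :
    q ≤ 1 / 2 + 2 * ε / (τ * (1 - τ)) := by
  set δ := 2 * ε / (τ * (1 - τ)) with hδ
  by_contra! hlt
  have hτ₀ : 0 < τ := by linarith
  have hτ₁ : 0 < 1 - τ := by linarith
  have hδ₀ : 0 < δ := by positivity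
  have hs₀ : 0 < 2 * δ * ε := by positivity
  have hs : 4 * ε ^ 2 ≤ 2 * δ * ε * (τ * (1 - τ)) :=
    le_of_eq (by rw [hδ]; field_simp [hτ₀.ne', hτ₁.ne']; ring)
  have hsε : 2 * δ * ε < ε := by nlinarith
  have hsecant := Real.two_mul_mul_deriv_binEntropy_lt_sub hε hετ hε1τ hs hsε
  have htangent := Real.binEntropy_le_add_deriv_mul_sub (a := τ + 2 * δ * ε)
    (b := τ + (2 * q - 1) * ε) (by linarith) (by linarith) ⟨by nlinarith, by nlinarith⟩
  have hcompare := isMaxOn_iff.mp hmax (1 / 2 + δ) ⟨by positivity, by linarith⟩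
  rw [mutualInfo_eq, mutualInfo_eq, div_le_div_iff_of_pos_right (Real.log_pos one_lt_two),
    show τ + (2 * (1 / 2 + δ) - 1) * ε = τ + 2 * δ * ε by ring] at hcompare
  nlinarith [mul_lt_mul_of_pos_right hsecant (sub_pos.mpr hlt)]

theorem capacity_achieving_quantile_near_half_general (τ ε q : ℝ)
    (hε0 : 0 < ε) (hε : ε ≤ (1/2) * min τ (1 - τ))
    (hq : q ∈ Set.Icc (0 : ℝ) 1)
    (hmax : ∀ x ∈ Set.Icc (0 : ℝ) 1, mutualInfo τ ε x ≤ mutualInfo τ ε q) :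
    |q - 1/2| ≤ 2 * ε / (τ * (1 - τ)) := by
  have hετ : ε ≤ τ / 2 := by linarith [min_le_left τ (1 - τ)]
  have hε1τ : ε ≤ (1 - τ) / 2 := by linarith [min_le_right τ (1 - τ)]
  have hupper := le_half_add_of_isMaxOn_mutualInfo hε0 hετ hε1τ hq.2 (isMaxOn_iff.mpr hmax)
  have hsymm : IsMaxOn (mutualInfo (1 - τ) ε) (Icc 0 1) (1 - q) := isMaxOn_iff.mpr fun x hx ↦ by
    rw [mutualInfo_one_sub_one_sub, ← sub_sub_cancel 1 x, mutualInfo_one_sub_one_sub]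
    exact hmax (1 - x) ⟨by linarith [hx.2], by linarith [hx.1]⟩
  have hlower := le_half_add_of_isMaxOn_mutualInfo hε0 (by linarith) (by linarith)
    (by linarith [hq.1]) hsymm
  rw [show (1 - τ) * (1 - (1 - τ)) = τ * (1 - τ) by ring] at hlower
  rw [abs_le]
  constructor <;> linarith

theorem capacity_achieving_quantile_near_half (τ ε q : ℝ)
    (hτ0 : 0 < τ) (hτ1 : τ < 1) (hε0 : 0 < ε) (hε : ε ≤ (1/2) * min τ (1 - τ))
    (hq : q ∈ Set.Icc (0 : ℝ) 1)
    (hmax : ∀ x ∈ Set.Icc (0 : ℝ) 1, mutualInfo τ ε x ≤ mutualInfo τ ε q) :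
    |q - 1/2| ≤ 2 * ε / (τ * (1 - τ)) :=
  capacity_achieving_quantile_near_half_general τ ε q hε0 hε hq hmax
end

section
/- For τ ∈ (0,1) and 0 < ε < (1/2)·min(τ,1-τ), the maximum Bayesian log-update magnitude satisfies max(lg d₁₀ - lg d₀₀, lg d₀₁ - lg d₁₁) ≤ K·ε/(τ(1-τ)) for an absolute constant K (e.g. K = 6), where d₁₀=(τ+ε)/(τ+(2q-1)ε), d₀₀=(1-τ-ε)/(1-τ-(2q-1)ε), d₀₁=(1-τ+ε)/(1-τ-(2q-1)ε), d₁₁=(τ-ε)/(τ+(2q-1)ε), and q ∈ [0,1]. -/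
/-!
Write `c = (2q - 1)ε ∈ [-ε, ε]`. Each difference of log-updates splits as `lg (x / y) + lg (z / w)`
with `x, y ∈ [τ - ε, τ + ε]` and `z, w ∈ [1 - τ - ε, 1 - τ + ε]`. A ratio of two points of
`[a - ε, a + ε]` is at most `(1 + u) / (1 - u)` with `u = ε / a ≤ 1/2`, and
`ln ((1 + u) / (1 - u)) ≤ 3u` there, so `lg (x / y) ≤ 6ε / a`. Summing the two bounds gives
`6ε / τ + 6ε / (1 - τ) = 6ε / (τ (1 - τ))`.
-/

open Real Set

lemma log_one_add_div_one_sub_le {u : ℝ} (hu0 : 0 ≤ u) (hu : u ≤ 1 / 2) :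
    log ((1 + u) / (1 - u)) ≤ 3 * u := by
  have hsub : 0 < 1 - u := by linarith
  rw [log_div (by positivity) hsub.ne']
  have hplus : log (1 + u) ≤ u := by
    linarith [log_le_sub_one_of_pos (show 0 < 1 + u by positivity)]
  have hminus : 1 - (1 - u)⁻¹ ≤ log (1 - u) := one_sub_inv_le_log_of_pos hsub
  have hinv : (1 - u)⁻¹ ≤ 1 + 2 * u := by
    rw [inv_le_iff_one_le_mul₀ hsub]
    nlinarith
  linarith

lemma logb_two_one_add_div_one_sub_le {u : ℝ} (hu0 : 0 ≤ u) (hu : u ≤ 1 / 2) :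
    logb 2 ((1 + u) / (1 - u)) ≤ 6 * u := by
  have hlog2 : 1 / 2 < log 2 := by linarith [log_two_gt_d9]
  rw [logb, div_le_iff₀ (by linarith)]
  nlinarith [log_one_add_div_one_sub_le hu0 hu]

lemma logb_two_div_le_of_mem_Icc {a ε x y : ℝ} (ha : 0 < a) (hεa : 2 * ε ≤ a)
    (hx : x ∈ Icc (a - ε) (a + ε)) (hy : y ∈ Icc (a - ε) (a + ε)) :
    logb 2 (x / y) ≤ 6 * ε / a := by
  obtain ⟨hx0, hx1⟩ := hx
  obtain ⟨hy0, hy1⟩ := hy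
  have hε : 0 ≤ ε := by linarith
  have hy : 0 < y := by linarith
  have hratio : x / y ≤ (1 + ε / a) / (1 - ε / a) := by
    rw [one_add_div ha.ne', one_sub_div ha.ne', div_div_div_cancel_right₀ ha.ne']
    exact div_le_div₀ (by linarith) hx1 (by linarith) hy0
  calc logb 2 (x / y) ≤ logb 2 ((1 + ε / a) / (1 - ε / a)) :=
        logb_le_logb_of_le one_lt_two (div_pos (by linarith) hy) hratio
    _ ≤ 6 * (ε / a) := by
        apply logb_two_one_add_div_one_sub_le (by positivity)
        rw [div_le_iff₀ ha]
        linarith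
    _ = 6 * ε / a := by ring

theorem update_magnitude_bound (τ ε q : ℝ)
    (hτ0 : 0 < τ) (hτ1 : τ < 1) (hε0 : 0 < ε) (hε : ε < (1/2) * min τ (1 - τ))
    (hq : q ∈ Set.Icc (0 : ℝ) 1) :
    max (Real.logb 2 ((τ + ε) / (τ + (2 * q - 1) * ε))
          - Real.logb 2 ((1 - τ - ε) / (1 - τ - (2 * q - 1) * ε)))
        (Real.logb 2 ((1 - τ + ε) / (1 - τ - (2 * q - 1) * ε))
          - Real.logb 2 ((τ - ε) / (τ + (2 * q - 1) * ε))) ≤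
      6 * ε / (τ * (1 - τ)) := by
  obtain ⟨hq0, hq1⟩ := hq
  have hτ' : 0 < 1 - τ := sub_pos.2 hτ1
  have hετ : 2 * ε ≤ τ := by linarith [min_le_left τ (1 - τ)]
  have hετ' : 2 * ε ≤ 1 - τ := by linarith [min_le_right τ (1 - τ)]
  set c := (2 * q - 1) * ε
  have hc : -ε ≤ c ∧ c ≤ ε := ⟨by nlinarith, by nlinarith⟩
  have h10 : logb 2 ((τ + ε) / (τ + c)) ≤ 6 * ε / τ := by
    refine logb_two_div_le_of_mem_Icc hτ0 hετ ⟨?_, ?_⟩ ⟨?_, ?_⟩ <;> linarith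
  have h00 : -logb 2 ((1 - τ - ε) / (1 - τ - c)) ≤ 6 * ε / (1 - τ) := by
    rw [← logb_inv, inv_div]
    refine logb_two_div_le_of_mem_Icc hτ' hετ' ⟨?_, ?_⟩ ⟨?_, ?_⟩ <;> linarith
  have h01 : logb 2 ((1 - τ + ε) / (1 - τ - c)) ≤ 6 * ε / (1 - τ) := by
    refine logb_two_div_le_of_mem_Icc hτ' hετ' ⟨?_, ?_⟩ ⟨?_, ?_⟩ <;> linarith
  have h11 : -logb 2 ((τ - ε) / (τ + c)) ≤ 6 * ε / τ := by
    rw [← logb_inv, inv_div]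
    refine logb_two_div_le_of_mem_Icc hτ0 hετ ⟨?_, ?_⟩ ⟨?_, ?_⟩ <;> linarith
  have hsum : 6 * ε / τ + 6 * ε / (1 - τ) = 6 * ε / (τ * (1 - τ)) := by
    field_simp
    ring
  exact max_le (by linarith) (by linarith)
end
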